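/- Let T_2 be the eventually periodic sequence in Z/4Z with initial block 1000212 followed by the infinitely repeated period 312223301210312003103232. Then for every integer k ≥ 0, the Steinhaus triangle of the initial segment T_2[8k+7] of length 8k+7 is strongly balanced in Z/4Z. -/

import Mathlib

/-- Next row of a Steinhaus triangle: pairwise sums of adjacent entries. -/
def nextRow {m : ℕ} (l : List (ZMod m)) : List (ZMod m) :=
  List.zipWith (· + ·) l l.tail

/-- The rows of the Steinhaus triangle generated by the first row `l`. -/
def triangleRows {m : ℕ} (l : List (ZMod m)) : List (List (ZMod m)) :=
  (List.range l.length).map (fun i => nextRow^[i] l)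

/-- All entries of the Steinhaus triangle generated by `l`. -/
def triangleEntries {m : ℕ} (l : List (ZMod m)) : List (ZMod m) :=
  (triangleRows l).flatten

/-- The Steinhaus triangle of `l` is balanced: all elements of `ZMod m`
occur with the same multiplicity among its entries. -/
def IsBalanced {m : ℕ} (l : List (ZMod m)) : Prop :=
  ∀ a b : ZMod m, (triangleEntries l).count a = (triangleEntries l).count b

/-- The Steinhaus triangle of `l` is strongly balanced (with respect to a
given `step`): for every `t` with `step * t ≤ l.length`, the Steinhaus triangle
of the initial segment of `l` of length `l.length - step * t` is balanced. -/
def IsStronglyBalanced {m : ℕ} (step : ℕ) (l : List (ZMod m)) : Prop :=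
  ∀ t : ℕ, step * t ≤ l.length → IsBalanced (l.take (l.length - step * t))

/-- The eventually periodic sequence with initial block `I` and period `P`. -/
def evPeriodic {m : ℕ} (I P : List (ZMod m)) : ℕ → ZMod m :=
  fun i => if i < I.length then I.getD i 0 else P.getD ((i - I.length) % P.length) 0

/-- The initial segment of length `l` of the sequence `S`. -/
def seg {m : ℕ} (S : ℕ → ZMod m) (l : ℕ) : List (ZMod m) :=
  (List.range l).map S

def T2 : ℕ → ZMod 4 :=
  evPeriodic ([1,0,0,0,2,1,2] : List (ZMod 4)) ([3,1,2,2,2,3,3,0,1,2,1,0,3,1,2,0,0,3,1,0,3,2,3,2] : List (ZMod 4))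

/-!
Every row of the infinite Steinhaus triangle of an eventually periodic sequence is again
eventually periodic, with pre-period and period of the same lengths (7 and 24 for `T2`), and a
direct computation shows that for `T2` the rows themselves repeat with period 24 from row 2 on.
Let `F_a(N)` be the multiplicity of `a` in the triangle of `T2[N]`. Passing from `N` to `N + 24`
adds one period to each of the upper rows, while the lower rows depend only on their index
modulo 24. This gives `F_a(N + 48) - 2 F_a(N + 24) + F_a(N) = W_a`, where `W_a` counts `a` in 24
consecutive periods and does not depend on `a`. Hence balance at lengths `N` and `N + 24`
implies balance at `N + 48`, and the lengths `8k + 7` with `k ≤ 6` are checked by computation.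
-/

open Finset Function

section Sequences

variable {m : ℕ}

def steinhausStep (f : ℕ → ZMod m) : ℕ → ZMod m := fun j => f j + f (j + 1)

@[simp]
lemma length_seg (f : ℕ → ZMod m) (L : ℕ) : (seg f L).length = L := by
  simp [seg]

@[simp]
lemma getElem_seg (f : ℕ → ZMod m) (L j : ℕ) (h : j < (seg f L).length) :
    (seg f L)[j] = f j := by
  simp [seg]

lemma take_seg (f : ℕ → ZMod m) (n L : ℕ) : (seg f L).take n = seg f (min n L) := by
  rw [seg, seg, ← List.map_take, List.take_range]

lemma seg_add (f : ℕ → ZMod m) (L n : ℕ) :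
    seg f (L + n) = seg f L ++ (List.range n).map (fun j => f (L + j)) := by
  rw [seg, seg, List.range_add, List.map_append, List.map_map]
  rfl

@[simp]
lemma length_nextRow (l : List (ZMod m)) : (nextRow l).length = l.length - 1 := by
  simp [nextRow]

lemma getElem_nextRow (l : List (ZMod m)) (j : ℕ) (h : j < (nextRow l).length) :
    (nextRow l)[j] = l[j]'(by simp at h; omega) + l[j + 1]'(by simp at h; omega) := by
  simp [nextRow]

lemma getD_nextRow (l : List (ZMod m)) {j : ℕ} (h : j + 1 < l.length) :
    (nextRow l).getD j 0 = l.getD j 0 + l.getD (j + 1) 0 := by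
  rw [List.getD_eq_getElem _ _ (by simp; omega), getElem_nextRow,
    List.getD_eq_getElem _ _ (by omega), List.getD_eq_getElem _ _ h]

lemma nextRow_seg (f : ℕ → ZMod m) (L : ℕ) :
    nextRow (seg f L) = seg (steinhausStep f) (L - 1) := by
  refine List.ext_getElem (by simp) fun j _ _ => ?_
  simp [getElem_nextRow, steinhausStep]

lemma iterate_nextRow_seg (f : ℕ → ZMod m) (i L : ℕ) :
    nextRow^[i] (seg f L) = seg (steinhausStep^[i] f) (L - i) := by
  induction i with
  | zero => rfl
  | succ i ih =>
    rw [iterate_succ_apply' nextRow, ih, nextRow_seg, iterate_succ_apply' steinhausStep, Nat.sub_sub]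

end Sequences

def triangleSum (c : ℕ → ℕ → ℕ) (N : ℕ) : ℕ := ∑ i ∈ range N, c i (N - i)

lemma count_triangleEntries_seg {m : ℕ} (f : ℕ → ZMod m) (a : ZMod m) (N : ℕ) :
    (triangleEntries (seg f N)).count a
      = triangleSum (fun i L => (seg (steinhausStep^[i] f) L).count a) N := by
  rw [triangleEntries, List.count_flatten, triangleRows, length_seg, List.map_map]
  simp only [comp_def, iterate_nextRow_seg]
  rfl

section TriangleSum

variable (c : ℕ → ℕ → ℕ)

lemma triangleSum_add (M n : ℕ) :
    triangleSum c (M + n)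
      = ∑ i ∈ range M, c i (M + n - i) + ∑ j ∈ range n, c (M + j) (n - j) := by
  simp only [triangleSum, sum_range_add, Nat.add_sub_add_left]

variable {c} {q : ℕ → ℕ} {k p : ℕ}

lemma triangleSum_second_difference {r : ℕ}
    (hrow : ∀ i L, k < L → c i (L + p) = c i L + q i)
    (hcol : ∀ i, r ≤ i → c (i + p) = c i) {M : ℕ} (hM : r ≤ M) :
    triangleSum c (M + k + 2 * p) + triangleSum c (M + k)
      = 2 * triangleSum c (M + k + p) + ∑ j ∈ range p, q (M + j) := by
  -- Lengthening by `p` adds one period to each of the first `M'` rows, and the rows below them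
  -- depend only on their index modulo `p`.
  have head_rows (M' : ℕ) : triangleSum c (M' + k + p)
      = ∑ i ∈ range M', c i (M' + k - i) + ∑ i ∈ range M', q i
        + ∑ j ∈ range (k + p), c (M' + j) (k + p - j) := by
    rw [add_assoc, triangleSum_add, ← sum_add_distrib]
    congr 1
    refine sum_congr rfl fun i hi => ?_
    rw [mem_range] at hi
    rw [← hrow i (M' + k - i) (by omega)]
    congr 1
    omega
  have tail_rows (n : ℕ) :
      ∑ j ∈ range n, c (M + p + j) (n - j) = ∑ j ∈ range n, c (M + j) (n - j) :=
    sum_congr rfl fun j _ => by rw [add_right_comm, hcol _ (by omega)]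
  have h1 := head_rows M
  have h2 := head_rows (M + p)
  have h3 := triangleSum_add c M k
  have h4 := triangleSum_add c (M + p) k
  rw [sum_range_add q M p, tail_rows] at h2
  rw [tail_rows] at h4
  rw [show M + p + k = M + k + p by ring] at h2 h4
  rw [show M + k + 2 * p = M + k + p + p by ring]
  omega

end TriangleSum

lemma sum_range_add_eq_of_periodic {β : Type*} [AddCancelCommMonoid β] {q : ℕ → β} {p r : ℕ}
    (hq : ∀ i, r ≤ i → q (i + p) = q i) {M : ℕ} (hM : r ≤ M) :
    ∑ j ∈ range p, q (M + j) = ∑ j ∈ range p, q (r + j) := by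
  induction M, hM using Nat.le_induction with
  | base => rfl
  | succ M hM ih =>
    rw [← ih]
    have h := (sum_range_succ (fun j => q (M + j)) p).symm.trans (sum_range_succ' _ p)
    rw [hq M hM, add_zero] at h
    simp_rw [add_assoc M 1, add_comm 1]
    exact (add_right_cancel h).symm

section EventuallyPeriodic

variable {m : ℕ} {I P : List (ZMod m)}

lemma evPeriodic_of_lt {j : ℕ} (h : j < I.length) : evPeriodic I P j = I.getD j 0 := if_pos h

lemma evPeriodic_of_le {j : ℕ} (h : I.length ≤ j) :
    evPeriodic I P j = P.getD ((j - I.length) % P.length) 0 := if_neg (by omega)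

lemma getD_append_singleton_length (l : List (ZMod m)) (x : ZMod m) :
    (l ++ [x]).getD l.length 0 = x := by
  simp

-- The term following the initial block, and following each period, is the first term of `P`.
def nextBlocks (IP : List (ZMod m) × List (ZMod m)) : List (ZMod m) × List (ZMod m) :=
  (nextRow (IP.1 ++ [IP.2.getD 0 0]), nextRow (IP.2 ++ [IP.2.getD 0 0]))

@[simp]
lemma length_iterate_nextBlocks (IP : List (ZMod m) × List (ZMod m)) (i : ℕ) :
    (nextBlocks^[i] IP).1.length = IP.1.length ∧ (nextBlocks^[i] IP).2.length = IP.2.length := by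
  induction i with
  | zero => exact ⟨rfl, rfl⟩
  | succ i ih => simp [iterate_succ_apply', nextBlocks, ih]

lemma steinhausStep_evPeriodic (hP : P ≠ []) :
    steinhausStep (evPeriodic I P) = evPeriodic (nextBlocks (I, P)).1 (nextBlocks (I, P)).2 := by
  have hP_pos : 0 < P.length := List.length_pos_iff.mpr hP
  funext j
  simp only [steinhausStep, nextBlocks]
  rcases lt_or_ge j I.length with hj | hj
  · rw [evPeriodic_of_lt hj, evPeriodic_of_lt (j := j) (by simpa using hj),
      getD_nextRow _ (by simpa using hj), List.getD_append _ _ _ _ hj]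
    rcases lt_or_ge (j + 1) I.length with hj' | hj'
    · rw [List.getD_append _ _ _ _ hj', evPeriodic_of_lt hj']
    · have hlast : j + 1 = I.length := by omega
      rw [hlast, getD_append_singleton_length, evPeriodic_of_le le_rfl, Nat.sub_self,
        Nat.zero_mod]
  · set r := (j - I.length) % P.length
    have hr : r < P.length := Nat.mod_lt _ hP_pos
    have hsucc : (j + 1 - I.length) % P.length = (r + 1) % P.length := by
      rw [show j + 1 - I.length = j - I.length + 1 by omega, Nat.mod_add_mod]
    rw [evPeriodic_of_le hj, evPeriodic_of_le (show I.length ≤ j + 1 by omega), hsucc,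
      evPeriodic_of_le (j := j) (by simpa using hj)]
    simp only [length_nextRow, List.length_append, List.length_singleton, Nat.add_sub_cancel]
    rw [getD_nextRow _ (by simpa using hr), List.getD_append _ _ _ _ hr]
    rcases lt_or_ge (r + 1) P.length with hr' | hr'
    · rw [List.getD_append _ _ _ _ hr', Nat.mod_eq_of_lt hr']
    · have hlast : r + 1 = P.length := by omega
      rw [hlast, getD_append_singleton_length, Nat.mod_self]

lemma steinhausStep_iterate_evPeriodic (IP : List (ZMod m) × List (ZMod m)) (hP : IP.2 ≠ [])
    (i : ℕ) :
    steinhausStep^[i] (evPeriodic IP.1 IP.2)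
      = evPeriodic (nextBlocks^[i] IP).1 (nextBlocks^[i] IP).2 := by
  induction i with
  | zero => rfl
  | succ i ih =>
    have hP' : (nextBlocks^[i] IP).2 ≠ [] := by
      rw [← List.length_pos_iff, (length_iterate_nextBlocks IP i).2, List.length_pos_iff]
      exact hP
    rw [iterate_succ_apply', ih, steinhausStep_evPeriodic hP', ← iterate_succ_apply' nextBlocks]

lemma map_range_evPeriodic_eq_rotate {L : ℕ} (h : I.length ≤ L) :
    (List.range P.length).map (fun j => evPeriodic I P (L + j)) = P.rotate (L - I.length) := by
  refine List.ext_getElem (by simp) fun j hj _ => ?_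
  simp only [List.length_map, List.length_range] at hj
  rw [List.getElem_map, List.getElem_range, List.getElem_rotate, evPeriodic_of_le (by omega),
    List.getD_eq_getElem _ _ (Nat.mod_lt _ (by omega))]
  congr 2
  omega

lemma count_seg_evPeriodic_add_length {L : ℕ} (h : I.length ≤ L) (a : ZMod m) :
    (seg (evPeriodic I P) (L + P.length)).count a
      = (seg (evPeriodic I P) L).count a + P.count a := by
  rw [seg_add, List.count_append, map_range_evPeriodic_eq_rotate h,
    (List.rotate_perm P _).count_eq]

end EventuallyPeriodic

def T2Blocks : List (ZMod 4) × List (ZMod 4) :=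
  ([1,0,0,0,2,1,2], [3,1,2,2,2,3,3,0,1,2,1,0,3,1,2,0,0,3,1,0,3,2,3,2])

lemma steinhausStep_iterate_T2 (i : ℕ) :
    steinhausStep^[i] T2 = evPeriodic (nextBlocks^[i] T2Blocks).1 (nextBlocks^[i] T2Blocks).2 :=
  steinhausStep_iterate_evPeriodic T2Blocks (by decide) i

lemma isPeriodicPt_nextBlocks_T2 : IsPeriodicPt nextBlocks 24 (nextBlocks^[2] T2Blocks) := by
  decide

lemma nextBlocks_iterate_T2_add_period {i : ℕ} (h : 2 ≤ i) :
    nextBlocks^[i + 24] T2Blocks = nextBlocks^[i] T2Blocks := by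
  obtain ⟨d, rfl⟩ := Nat.exists_eq_add_of_le h
  have : nextBlocks^[24] (nextBlocks^[d] (nextBlocks^[2] T2Blocks)) = _ :=
    isPeriodicPt_nextBlocks_T2.apply_iterate d
  simp only [← iterate_add_apply] at this
  rwa [add_comm 2 d, add_comm _ 24]

def rowCount (a : ZMod 4) (i L : ℕ) : ℕ := (seg (steinhausStep^[i] T2) L).count a

def periodCount (a : ZMod 4) (i : ℕ) : ℕ := (nextBlocks^[i] T2Blocks).2.count a

lemma rowCount_length_add_period (a : ZMod 4) (i L : ℕ) (h : 6 < L) :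
    rowCount a i (L + 24) = rowCount a i L + periodCount a i := by
  obtain ⟨hI, hP⟩ := length_iterate_nextBlocks T2Blocks i
  rw [rowCount, rowCount, periodCount, steinhausStep_iterate_T2,
    ← show T2Blocks.2.length = 24 from rfl, ← hP]
  exact count_seg_evPeriodic_add_length (by rw [hI]; exact h) a

lemma rowCount_row_add_period (a : ZMod 4) {i : ℕ} (h : 2 ≤ i) :
    rowCount a (i + 24) = rowCount a i := by
  funext L
  simp only [rowCount, steinhausStep_iterate_T2, nextBlocks_iterate_T2_add_period h]

lemma periodCount_add_period (a : ZMod 4) {i : ℕ} (h : 2 ≤ i) :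
    periodCount a (i + 24) = periodCount a i := by
  rw [periodCount, periodCount, nextBlocks_iterate_T2_add_period h]

lemma sum_periodCount_eq (a b : ZMod 4) :
    ∑ j ∈ range 24, periodCount a (2 + j) = ∑ j ∈ range 24, periodCount b (2 + j) := by
  revert a b
  decide

lemma triangleSum_rowCount_second_difference (a : ZMod 4) (n : ℕ) :
    triangleSum (rowCount a) (8 * (n + 7) + 7) + triangleSum (rowCount a) (8 * (n + 1) + 7)
      = 2 * triangleSum (rowCount a) (8 * (n + 4) + 7) + ∑ j ∈ range 24, periodCount a (2 + j) := by
  have hM : 2 ≤ 8 * n + 9 := by omega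
  have h := triangleSum_second_difference (rowCount_length_add_period a)
    (fun _ => rowCount_row_add_period a) hM
  rw [show 8 * n + 9 + 6 = 8 * (n + 1) + 7 by ring,
    show 8 * (n + 1) + 7 + 2 * 24 = 8 * (n + 7) + 7 by ring,
    show 8 * (n + 1) + 7 + 24 = 8 * (n + 4) + 7 by ring,
    sum_range_add_eq_of_periodic (fun _ => periodCount_add_period a) hM] at h
  exact h

lemma isBalanced_seg_T2_iff (N : ℕ) :
    IsBalanced (seg T2 N) ↔ ∀ a b, triangleSum (rowCount a) N = triangleSum (rowCount b) N := by
  simp only [IsBalanced, count_triangleEntries_seg]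
  rfl

set_option maxRecDepth 10000 in
lemma isBalanced_seg_T2_of_lt {n : ℕ} (hn : n < 7) : IsBalanced (seg T2 (8 * n + 7)) := by
  unfold IsBalanced
  revert n
  decide

lemma isBalanced_seg_T2 (n : ℕ) : IsBalanced (seg T2 (8 * n + 7)) := by
  induction n using Nat.strong_induction_on with
  | _ n ih =>
    rcases lt_or_ge n 7 with hn | hn
    · exact isBalanced_seg_T2_of_lt hn
    obtain ⟨n, rfl⟩ : ∃ n', n = n' + 7 := ⟨n - 7, by omega⟩
    have h1 := (isBalanced_seg_T2_iff _).mp (ih (n + 1) (by omega))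
    have h4 := (isBalanced_seg_T2_iff _).mp (ih (n + 4) (by omega))
    refine (isBalanced_seg_T2_iff _).mpr fun a b => ?_
    have ha := triangleSum_rowCount_second_difference a n
    have hb := triangleSum_rowCount_second_difference b n
    have hW := sum_periodCount_eq a b
    linarith [h1 a b, h4 a b]

theorem stmt4 (k : ℕ) :
    IsStronglyBalanced 8 (seg T2 (8 * k + 7)) := by
  intro t ht
  rw [length_seg] at ht ⊢
  rw [take_seg, min_eq_left (Nat.sub_le _ _), show 8 * k + 7 - 8 * t = 8 * (k - t) + 7 by omega]
  exact isBalanced_seg_T2 (k - t)
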